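/- Let n be a positive integer, A a real n×n matrix, and θ a real number. If exactly n of the eigenvalues of the symmetric matrix Ā + θ·I (counted with multiplicity) are positive and exactly n are negative, then A is nonsingular and σ_min(A) > |θ|. -/

import Mathlib

open Matrix
open scoped RealInnerProductSpace

/-- Smallest singular value of a real square matrix: the square root of the
smallest eigenvalue of `AᵀA`. -/
noncomputable def sigmaMin {n : ℕ} (A : Matrix (Fin n) (Fin n) ℝ) : ℝ :=
  Real.sqrt (⨅ i, ((by first | exact Matrix.isHermitian_conjTranspose_mul_self A | simpa using Matrix.isHermitian_conjTranspose_mul_self A) :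
      (Aᵀ * A).IsHermitian).eigenvalues i)

/-- The symmetric block matrix `Ā = [[0, Aᵀ],[A, 0]]`. -/
def abar {n : ℕ} (A : Matrix (Fin n) (Fin n) ℝ) :
    Matrix (Fin n ⊕ Fin n) (Fin n ⊕ Fin n) ℝ :=
  Matrix.fromBlocks 0 Aᵀ A 0

section Aux

lemma quad_eq_sum {ι : Type*} [Fintype ι] [DecidableEq ι]
    (M : Matrix ι ι ℝ) (hM : M.IsHermitian) (v : EuclideanSpace ℝ ι) :
    ⟪v, WithLp.toLp 2 (M *ᵥ v)⟫
      = ∑ i, hM.eigenvalues i * (hM.eigenvectorBasis.repr v i) ^ 2 := by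
  set B := hM.eigenvectorBasis with hB
  have hv : (∑ i, B.repr v i • (B i : EuclideanSpace ℝ ι)) = v := B.sum_repr v
  have hMv : WithLp.toLp 2 (M *ᵥ v)
      = ∑ i, B.repr v i • ((hM.eigenvalues i • (B i : EuclideanSpace ℝ ι))) := by
    conv_lhs => rw [← hv]
    rw [show WithLp.toLp 2 (M *ᵥ (∑ i, B.repr v i • (B i : EuclideanSpace ℝ ι)).ofLp)
        = Matrix.toEuclideanLin M (∑ i, B.repr v i • (B i : EuclideanSpace ℝ ι)) from rfl]
    rw [map_sum]
    refine Finset.sum_congr rfl fun i _ => ?_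
    rw [_root_.map_smul]
    congr 1
    exact congrArg (WithLp.toLp 2) (hM.mulVec_eigenvectorBasis i)
  rw [hMv, inner_sum]
  refine Finset.sum_congr rfl fun i _ => ?_
  rw [real_inner_smul_right, real_inner_smul_right, real_inner_comm,
    ← B.repr_apply_apply]
  ring

lemma repr_eq_zero_of_mem_span {ι : Type*} [Fintype ι]
    (B : OrthonormalBasis ι ℝ (EuclideanSpace ℝ ι))
    (p : ι → Prop) {v : EuclideanSpace ℝ ι}
    (hv : v ∈ Submodule.span ℝ (Set.range ((B : ι → EuclideanSpace ℝ ι) ∘ (Subtype.val : {i // p i} → ι))))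
    {i : ι} (hi : ¬ p i) : B.repr v i = 0 := by
  have key : ∀ w ∈ Submodule.span ℝ (Set.range ((B : ι → EuclideanSpace ℝ ι) ∘ (Subtype.val : {i // p i} → ι))),
      ⟪(B i : EuclideanSpace ℝ ι), w⟫ = 0 := by
    intro w hw
    induction hw using Submodule.span_induction with
    | mem w hw =>
      obtain ⟨j, rfl⟩ := hw
      exact B.orthonormal.2 (fun h => hi (h ▸ j.2))
    | zero => exact inner_zero_right _
    | add u w _ _ hu hw => rw [inner_add_right, hu, hw, add_zero]
    | smul c w _ hw => rw [real_inner_smul_right, hw, mul_zero]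
  rw [B.repr_apply_apply]
  exact key v hv

/-- projection onto the `inl` coordinates -/
def projInl (n : ℕ) : EuclideanSpace ℝ (Fin n ⊕ Fin n) →ₗ[ℝ] (Fin n → ℝ) where
  toFun v := fun i => v (Sum.inl i)
  map_add' _ _ := rfl
  map_smul' _ _ := rfl

lemma exists_test_vector {n : ℕ} (B : OrthonormalBasis (Fin n ⊕ Fin n) ℝ (EuclideanSpace ℝ (Fin n ⊕ Fin n)))
    (p : Fin n ⊕ Fin n → Prop) [DecidablePred p]
    (hcard : Fintype.card {i // p i} = n)
    (x : EuclideanSpace ℝ (Fin n)) (hx : x ≠ 0) :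
    ∃ v : EuclideanSpace ℝ (Fin n ⊕ Fin n), v ≠ 0 ∧
      v ∈ Submodule.span ℝ (Set.range ((B : _ → EuclideanSpace ℝ (Fin n ⊕ Fin n)) ∘ (Subtype.val : {i // p i} → _))) ∧
      ∃ c : ℝ, ∀ i, v (Sum.inl i) = c * x i := by
  classical
  set E := EuclideanSpace ℝ (Fin n ⊕ Fin n) with hE
  have hEdim : Module.finrank ℝ E = n + n := by
    show Module.finrank ℝ (EuclideanSpace ℝ (Fin n ⊕ Fin n)) = n + n
    rw [finrank_euclideanSpace]
    simp
  set W : Submodule ℝ E := Submodule.span ℝ (Set.range ((B : _ → E) ∘ (Subtype.val : {i // p i} → _))) with hW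
  have hWdim : Module.finrank ℝ W = n := by
    rw [hW, finrank_span_eq_card (B.orthonormal.linearIndependent.comp Subtype.val Subtype.val_injective)]
    exact hcard
  have hsurj : Function.Surjective (projInl n) := fun w => ⟨WithLp.toLp 2 (Sum.elim w 0), rfl⟩
  have hKdim : Module.finrank ℝ (LinearMap.ker (projInl n)) = n := by
    have h1 := (projInl n).finrank_range_add_finrank_ker
    rw [LinearMap.range_eq_top.mpr hsurj, finrank_top, Module.finrank_pi, hEdim] at h1
    simpa using h1
  set e : E := WithLp.toLp 2 (Sum.elim x 0) with heq
  have he : e ≠ 0 := by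
    intro h
    apply hx
    ext i
    exact congrFun (congrArg (fun (v : E) => (v : (Fin n ⊕ Fin n) → ℝ)) h) (Sum.inl i)
  set U : Submodule ℝ E := Submodule.span ℝ {e} ⊔ LinearMap.ker (projInl n) with hU
  have hinf : Submodule.span ℝ {e} ⊓ LinearMap.ker (projInl n) = ⊥ := by
    rw [Submodule.eq_bot_iff]
    intro v hv
    rw [Submodule.mem_inf] at hv
    obtain ⟨hv1, hv2⟩ := hv
    obtain ⟨c, rfl⟩ := Submodule.mem_span_singleton.mp hv1
    rw [LinearMap.mem_ker] at hv2
    rcases eq_or_ne c 0 with h | h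
    · rw [h, zero_smul]
    · exfalso
      apply hx
      ext i
      have h2 : c * x i = 0 := congrFun hv2 i
      exact (mul_eq_zero.mp h2).resolve_left h
  have hUdim : Module.finrank ℝ U = n + 1 := by
    have h1 := Submodule.finrank_sup_add_finrank_inf_eq (Submodule.span ℝ {e}) (LinearMap.ker (projInl n))
    rw [hinf, finrank_bot, finrank_span_singleton he, hKdim, ← hU] at h1
    omega
  have hne : U ⊓ W ≠ ⊥ := by
    intro hbot
    have h1 := Submodule.finrank_sup_add_finrank_inf_eq U W
    rw [hbot, finrank_bot, hUdim, hWdim] at h1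
    have h2 : Module.finrank ℝ (U ⊔ W : Submodule ℝ E) ≤ n + n := hEdim ▸ Submodule.finrank_le _
    omega
  obtain ⟨v, hv, hv0⟩ := Submodule.exists_mem_ne_zero_of_ne_bot hne
  rw [Submodule.mem_inf] at hv
  refine ⟨v, hv0, hv.2, ?_⟩
  obtain ⟨a, ha, b, hb, rfl⟩ := Submodule.mem_sup.mp hv.1
  obtain ⟨c, rfl⟩ := Submodule.mem_span_singleton.mp ha
  refine ⟨c, fun i => ?_⟩
  rw [LinearMap.mem_ker] at hb
  have hb0 : b (Sum.inl i) = 0 := congrFun hb i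
  show c • e (Sum.inl i) + b (Sum.inl i) = c * x i
  rw [hb0, heq]
  simp

lemma euclidean_inner_eq_dot {m : Type*} [Fintype m] (u w : EuclideanSpace ℝ m) :
    ⟪u, w⟫ = (u : m → ℝ) ⬝ᵥ (w : m → ℝ) := by
  simp [PiLp.inner_apply, RCLike.inner_apply, dotProduct, mul_comm]

lemma quad_abar {n : ℕ} (A : Matrix (Fin n) (Fin n) ℝ) (θ : ℝ)
    (v : EuclideanSpace ℝ (Fin n ⊕ Fin n)) (c : ℝ)
    (x y : EuclideanSpace ℝ (Fin n))
    (hvl : ∀ i, v (Sum.inl i) = c * x i) (hvr : ∀ j, v (Sum.inr j) = y j) :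
    ⟪v, WithLp.toLp 2 ((abar A + θ • 1) *ᵥ v)⟫
      = θ * (c ^ 2 * ‖x‖ ^ 2 + ‖y‖ ^ 2) + 2 * c * ⟪y, WithLp.toLp 2 (A *ᵥ x)⟫ := by
  set x' : Fin n → ℝ := fun i => x i with hx'
  set y' : Fin n → ℝ := fun j => y j with hy'
  have hv : (v : (Fin n ⊕ Fin n) → ℝ) = Sum.elim (c • x') y' := by
    funext s
    cases s with
    | inl i => simpa using hvl i
    | inr j => simpa using hvr j
  have hx2 : x' ⬝ᵥ x' = ‖x‖ ^ 2 := by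
    rw [show x' ⬝ᵥ x' = ⟪x, x⟫ from (euclidean_inner_eq_dot x x).symm, real_inner_self_eq_norm_sq]
  have hy2 : y' ⬝ᵥ y' = ‖y‖ ^ 2 := by
    rw [show y' ⬝ᵥ y' = ⟪y, y⟫ from (euclidean_inner_eq_dot y y).symm, real_inner_self_eq_norm_sq]
  have hyAx : y' ⬝ᵥ (A *ᵥ x') = ⟪y, WithLp.toLp 2 (A *ᵥ x)⟫ :=
    (euclidean_inner_eq_dot y (WithLp.toLp 2 (A *ᵥ x))).symm
  rw [euclidean_inner_eq_dot, WithLp.ofLp_toLp]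
  rw [Matrix.add_mulVec, Matrix.smul_mulVec, Matrix.one_mulVec]
  rw [dotProduct_add]
  rw [hv]
  rw [abar, Matrix.fromBlocks_mulVec]
  rw [Matrix.zero_mulVec, Matrix.zero_mulVec, zero_add, add_zero]
  rw [show (θ • Sum.elim (c • x') y') = Sum.elim (θ • (c • x')) (θ • y') by
    funext s; cases s <;> rfl]
  rw [sumElim_dotProduct_sumElim, sumElim_dotProduct_sumElim]
  simp only [Sum.elim_comp_inl, Sum.elim_comp_inr]
  rw [Matrix.dotProduct_mulVec _ Aᵀ, Matrix.vecMul_transpose]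
  simp only [Matrix.mulVec_smul, smul_dotProduct, dotProduct_smul, smul_eq_mul,
    dotProduct_comm (A *ᵥ x') y']
  rw [hx2, hy2, hyAx]
  ring

end Aux

theorem stmt4 {n : ℕ} (hn : 0 < n) (A : Matrix (Fin n) (Fin n) ℝ) (θ : ℝ)
    (hH : (abar A + θ • (1 : Matrix (Fin n ⊕ Fin n) (Fin n ⊕ Fin n) ℝ)).IsHermitian)
    (hpos : Fintype.card {i // 0 < hH.eigenvalues i} = n)
    (hneg : Fintype.card {i // hH.eigenvalues i < 0} = n) :
    IsUnit A ∧ |θ| < sigmaMin A := by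
  classical
  set B := hH.eigenvectorBasis with hBdef
  -- main claim
  have hmain : ∀ x : EuclideanSpace ℝ (Fin n), x ≠ 0 →
      ∀ Ax : EuclideanSpace ℝ (Fin n), Ax = A *ᵥ x → |θ| * ‖x‖ < ‖Ax‖ := by
    intro x hx Ax hAxeq
    by_contra hle
    push_neg at hle
    have hxpos : (0:ℝ) < ‖x‖ := norm_pos_iff.mpr hx
    rcases le_or_gt 0 θ with hθ | hθ
    · -- use negative eigenspace
      obtain ⟨v, hv0, hvW, c, hvl⟩ := exists_test_vector B (fun i => hH.eigenvalues i < 0) hneg x hx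
      set y : EuclideanSpace ℝ (Fin n) := WithLp.toLp 2 (fun j => v (Sum.inr j)) with hy
      have hq := quad_abar A θ v c x y hvl (fun j => rfl)
      rw [← hAxeq, WithLp.toLp_ofLp] at hq
      have hqs := quad_eq_sum _ hH v
      have hrepr0 : ∀ i, ¬ (hH.eigenvalues i < 0) → B.repr v i = 0 :=
        fun i hi => repr_eq_zero_of_mem_span B _ hvW hi
      have hex : ∃ i, B.repr v i ≠ 0 := by
        by_contra h
        push_neg at h
        apply hv0
        have h0 : B.repr v = 0 := by
          ext i; exact h i
        have := congrArg B.repr.symm h0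
        simpa using this
      obtain ⟨i0, hi0⟩ := hex
      have hlam0 : hH.eigenvalues i0 < 0 := by
        by_contra h
        exact hi0 (hrepr0 i0 h)
      have hsum : ∑ i, hH.eigenvalues i * (B.repr v i) ^ 2 < 0 := by
        have h1 : ∀ i ∈ Finset.univ, hH.eigenvalues i * (B.repr v i) ^ 2 ≤ (fun _ => (0:ℝ)) i := by
          intro i _
          rcases lt_or_ge (hH.eigenvalues i) 0 with h | h
          · exact mul_nonpos_iff.mpr (Or.inr ⟨le_of_lt h, sq_nonneg _⟩)
          · rw [hrepr0 i (not_lt.mpr h)]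
            simp
        have h2 : ∃ i ∈ Finset.univ, hH.eigenvalues i * (B.repr v i) ^ 2 < (fun _ => (0:ℝ)) i :=
          ⟨i0, Finset.mem_univ _, mul_neg_of_neg_of_pos hlam0 (by positivity)⟩
        have := Finset.sum_lt_sum h1 h2
        simpa using this
      -- positivity of the quadratic form
      have hAx : ‖Ax‖ ≤ θ * ‖x‖ := by
        rwa [abs_of_nonneg hθ] at hle
      have habs : |⟪y, Ax⟫| ≤ ‖y‖ * ‖Ax‖ := abs_real_inner_le_norm _ _
      have h1 : |⟪y, Ax⟫| ≤ ‖y‖ * (θ * ‖x‖) :=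
        habs.trans (mul_le_mul_of_nonneg_left hAx (norm_nonneg y))
      have h2 : -( |c| * (‖y‖ * (θ * ‖x‖)) ) ≤ c * ⟪y, Ax⟫ := by
        have h3 : |c * ⟪y, Ax⟫| ≤ |c| * (‖y‖ * (θ * ‖x‖)) := by
          rw [abs_mul]
          exact mul_le_mul_of_nonneg_left h1 (abs_nonneg c)
        have := neg_abs_le (c * ⟪y, Ax⟫)
        linarith
      have hq0 : 0 ≤ ⟪v, WithLp.toLp 2 ((abar A + θ • 1) *ᵥ v)⟫ := by
        rw [hq, ← sq_abs c]
        nlinarith [mul_nonneg hθ (sq_nonneg (|c| * ‖x‖ - ‖y‖))]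
      rw [hqs] at hq0
      linarith
    · -- θ < 0 : use positive eigenspace
      obtain ⟨v, hv0, hvW, c, hvl⟩ := exists_test_vector B (fun i => 0 < hH.eigenvalues i) hpos x hx
      set y : EuclideanSpace ℝ (Fin n) := WithLp.toLp 2 (fun j => v (Sum.inr j)) with hy
      have hq := quad_abar A θ v c x y hvl (fun j => rfl)
      rw [← hAxeq, WithLp.toLp_ofLp] at hq
      have hqs := quad_eq_sum _ hH v
      have hrepr0 : ∀ i, ¬ (0 < hH.eigenvalues i) → B.repr v i = 0 :=
        fun i hi => repr_eq_zero_of_mem_span B _ hvW hi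
      have hex : ∃ i, B.repr v i ≠ 0 := by
        by_contra h
        push_neg at h
        apply hv0
        have h0 : B.repr v = 0 := by
          ext i; exact h i
        have := congrArg B.repr.symm h0
        simpa using this
      obtain ⟨i0, hi0⟩ := hex
      have hlam0 : 0 < hH.eigenvalues i0 := by
        by_contra h
        exact hi0 (hrepr0 i0 h)
      have hsum : 0 < ∑ i, hH.eigenvalues i * (B.repr v i) ^ 2 := by
        have h1 : ∀ i ∈ Finset.univ, (fun _ => (0:ℝ)) i ≤ hH.eigenvalues i * (B.repr v i) ^ 2 := by
          intro i _
          rcases lt_or_ge 0 (hH.eigenvalues i) with h | h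
          · exact mul_nonneg (le_of_lt h) (sq_nonneg _)
          · rw [hrepr0 i (not_lt.mpr h)]
            simp
        have h2 : ∃ i ∈ Finset.univ, (fun _ => (0:ℝ)) i < hH.eigenvalues i * (B.repr v i) ^ 2 :=
          ⟨i0, Finset.mem_univ _, mul_pos hlam0 (by positivity)⟩
        have := Finset.sum_lt_sum h1 h2
        simpa using this
      have hAx : ‖Ax‖ ≤ -θ * ‖x‖ := by
        rwa [abs_of_neg hθ] at hle
      have habs : |⟪y, Ax⟫| ≤ ‖y‖ * ‖Ax‖ := abs_real_inner_le_norm _ _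
      have h1 : |⟪y, Ax⟫| ≤ ‖y‖ * (-θ * ‖x‖) :=
        habs.trans (mul_le_mul_of_nonneg_left hAx (norm_nonneg y))
      have h2 : c * ⟪y, Ax⟫ ≤ |c| * (‖y‖ * (-θ * ‖x‖)) := by
        have h3 : |c * ⟪y, Ax⟫| ≤ |c| * (‖y‖ * (-θ * ‖x‖)) := by
          rw [abs_mul]
          exact mul_le_mul_of_nonneg_left h1 (abs_nonneg c)
        have := le_abs_self (c * ⟪y, Ax⟫)
        linarith
      have hq0 : ⟪v, WithLp.toLp 2 ((abar A + θ • 1) *ᵥ v)⟫ ≤ 0 := by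
        rw [hq, ← sq_abs c]
        nlinarith [mul_nonneg (le_of_lt (neg_pos.mpr hθ)) (sq_nonneg (|c| * ‖x‖ - ‖y‖))]
      rw [hqs] at hq0
      linarith
  -- A is a unit
  have hdet : A.det ≠ 0 := by
    intro hdet
    obtain ⟨w, hw0, hw⟩ := Matrix.exists_mulVec_eq_zero_iff.mpr hdet
    have h := hmain (WithLp.toLp 2 w) (by simpa using hw0) 0 (by simpa using hw.symm)
    rw [norm_zero] at h
    exact absurd h (not_lt.mpr (mul_nonneg (abs_nonneg θ) (norm_nonneg _)))
  refine ⟨(Matrix.isUnit_iff_isUnit_det A).mpr (isUnit_iff_ne_zero.mpr hdet), ?_⟩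
  -- bound on eigenvalues of AᵀA
  have hB : (Aᵀ * A).IsHermitian := Matrix.isHermitian_conjTranspose_mul_self A
  have hmu : ∀ i, θ ^ 2 < hB.eigenvalues i := by
    intro i
    set w : EuclideanSpace ℝ (Fin n) := hB.eigenvectorBasis i with hwdef
    have hw1 : ‖w‖ = 1 := hB.eigenvectorBasis.orthonormal.1 i
    have hw0 : w ≠ 0 := by
      intro h
      rw [h, norm_zero] at hw1
      exact one_ne_zero hw1.symm
    set Aw : EuclideanSpace ℝ (Fin n) := WithLp.toLp 2 (A *ᵥ w) with hAwdef
    have heig : (Aᵀ * A) *ᵥ w = hB.eigenvalues i • (w : Fin n → ℝ) :=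
      hB.mulVec_eigenvectorBasis i
    have h1 : (w : Fin n → ℝ) ⬝ᵥ ((Aᵀ * A) *ᵥ w) = hB.eigenvalues i := by
      rw [heig, dotProduct_smul, smul_eq_mul,
        show (w : Fin n → ℝ) ⬝ᵥ (w : Fin n → ℝ) = ‖w‖ ^ 2 by
          rw [← euclidean_inner_eq_dot, real_inner_self_eq_norm_sq], hw1]
      ring
    have h2 : (w : Fin n → ℝ) ⬝ᵥ ((Aᵀ * A) *ᵥ w) = ‖Aw‖ ^ 2 := by
      rw [← Matrix.mulVec_mulVec, Matrix.dotProduct_mulVec _ Aᵀ, Matrix.vecMul_transpose,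
        show A *ᵥ w.ofLp = Aw.ofLp from rfl, show Aw ⬝ᵥ Aw = ‖Aw‖ ^ 2 by
          rw [← euclidean_inner_eq_dot, real_inner_self_eq_norm_sq]]
    have h3 : |θ| < ‖Aw‖ := by
      have := hmain w hw0 Aw (congrArg WithLp.ofLp hAwdef)
      rwa [hw1, mul_one] at this
    have h4 : θ ^ 2 < ‖Aw‖ ^ 2 := by
      have := pow_lt_pow_left₀ h3 (abs_nonneg θ) (two_ne_zero)
      rwa [sq_abs] at this
    rw [← h1, h2]
    exact h4
  have hnty : Nonempty (Fin n) := ⟨⟨0, hn⟩⟩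
  obtain ⟨i0, hi0⟩ := exists_eq_ciInf_of_finite (f := hB.eigenvalues)
  have hfin : |θ| < Real.sqrt (⨅ i, hB.eigenvalues i) := by
    rw [← hi0]
    calc |θ| = Real.sqrt (θ ^ 2) := (Real.sqrt_sq_eq_abs θ).symm
      _ < Real.sqrt (hB.eigenvalues i0) := Real.sqrt_lt_sqrt (sq_nonneg θ) (hmu i0)
  exact hfin
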